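/- Let $\mathcal{P}$ be a 1-category and identify $m$-simplices of $N(\Sigma\mathcal{P})$ with functors $\sigma: [k] \times [l]^{\mathrm{op}} \to \mathcal{P}$ where $k + l = m - 1$ ($k$ is called the type of $\sigma$). Let $\sigma: [k] \times [d-k]^{\mathrm{op}} \to \mathcal{P}$ be a non-degenerate suspect $(d+1)$-simplex of type $k$ and suspect index $r \le k$. Then the face $d_a(\sigma)$ is: a suspect simplex if $0 \le a \le r-2$; of suspect index at most $r-1$ if $a = r-1$; of type $k-1$ and suspect index $r$ if $a = r$; a suspect simplex if $r+1 \le a \le k$; and of type $k$ if $k+1 \le a \le d+1$. -/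

import Mathlib

/-!
STATEMENT 13: Let 𝒫 be a 1-category, and identify m-simplices of N(Σ𝒫) with
functors σ : [k] × [l]ᵒᵖ → 𝒫, k + l = m - 1 (k is the type of σ).  Let
σ : [k] × [d-k]ᵒᵖ → 𝒫 be a non-degenerate suspect (d+1)-simplex of type k and
suspect index r ≤ k.  Then the face d_a σ is: a suspect simplex if
0 ≤ a ≤ r-2; of suspect index at most r-1 if a = r-1; of type k-1 and suspect
index r if a = r; a suspect simplex if r+1 ≤ a ≤ k; and of type k if
k+1 ≤ a ≤ d+1.

The suspect index is the minimal 0 ≤ r ≤ k such that rows r, …, k are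
constant (k+1 if none); a simplex is suspect if it is degenerate or has
suspect index r ≤ k with σ((r-1,0) < (r,0)) an identity.  Faces delete a row
or a column.  (We write the d of the statement as e + 1, so that the faces of
our (d+1)-simplex are still at least 1-dimensional and the notions apply.)
-/

open CategoryTheory

/-- An `m`-simplex of the simplicial set of `𝒫`-matrices: a pair `(k, l)` with
`k, l ≥ -1`, `k + l = m - 1` (encoded as `k1 = k+1`, `l1 = l+1` with
`k1 + l1 = m + 1`) together with a functor `[k] × [l]ᵒᵖ ⥤ 𝒫` (when `k1 = 0` or
`l1 = 0` the domain is empty, so there is a unique such functor). -/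
structure MatSimplex (P : Type) [SmallCategory P] (m : ℕ) : Type where
  k1 : ℕ
  l1 : ℕ
  hkl : k1 + l1 = m + 1
  mat : (Fin k1 × (Fin l1)ᵒᵖ) ⥤ P

variable {P : Type} [SmallCategory P]

/-- The face maps of the simplicial set of matrices: `dFace s a` removes the
`a`-th row of the matrix if `a ≤ k` (i.e. `a < k1`), and the `(a - k - 1)`-st
column otherwise. -/
def dFace {m : ℕ} (s : MatSimplex P (m + 1)) (a : Fin (m + 2)) : MatSimplex P m :=
  if h : a.val < s.k1 then
    match s, h with
    | ⟨0, _, _, _⟩, h => absurd h (Nat.not_lt_zero _)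
    | ⟨k + 1, l1, hkl, mat⟩, h =>
      ⟨k, l1, by omega,
        ((Fin.strictMono_succAbove (⟨a.val, h⟩ : Fin (k + 1))).monotone.functor.prod
          (Functor.id _)) ⋙ mat⟩
  else
    match s, h with
    | ⟨k1, 0, hkl, _⟩, h => absurd (show a.val < k1 by have := a.isLt; omega) h
    | ⟨k1, l + 1, hkl, mat⟩, h =>
      ⟨k1, l, by omega,
        ((Functor.id _).prod
          ((Fin.strictMono_succAbove (⟨a.val - k1, by have := a.isLt; omega⟩ :
              Fin (l + 1))).monotone.functor.op)) ⋙ mat⟩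

/-- The degeneracy maps of the simplicial set of matrices: `sDeg t a` doubles
the `a`-th row (inserting identities) if `a ≤ k`, and the `(a - k - 1)`-st
column otherwise. -/
def sDeg {m : ℕ} (t : MatSimplex P m) (a : Fin (m + 1)) : MatSimplex P (m + 1) :=
  if h : a.val < t.k1 then
    ⟨t.k1 + 1, t.l1, by have := t.hkl; omega,
      ((Fin.predAbove_right_monotone (⟨a.val, h⟩ : Fin t.k1)).functor.prod
        (Functor.id _)) ⋙ t.mat⟩
  else
    ⟨t.k1, t.l1 + 1, by have := t.hkl; omega,
      ((Functor.id _).prod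
        ((Fin.predAbove_right_monotone (⟨a.val - t.k1, by have := a.isLt; have := t.hkl; omega⟩ :
            Fin t.l1)).functor.op)) ⋙ t.mat⟩

open CategoryTheory

variable {P : Type} [SmallCategory P]

/-- The `i`-th row of a matrix simplex is constant. -/
def RowConst {m : ℕ} (s : MatSimplex P m) (i : Fin s.k1) : Prop :=
  ∀ (c c' : Fin s.l1) (h : c ≤ c'),
    ∃ he : s.mat.obj (i, Opposite.op c') = s.mat.obj (i, Opposite.op c),
      s.mat.map ((𝟙 i, (homOfLE h).op) : (i, Opposite.op c') ⟶ (i, Opposite.op c)) =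
        eqToHom he

/-- The suspect index of a matrix simplex of type `k` (`k1 = k + 1`): the
minimal `r` such that all rows `r ≤ i ≤ k` are constant (this set of `r`'s
always contains `k + 1`, so the index is at most `k + 1`). -/
noncomputable def suspectIndex {m : ℕ} (s : MatSimplex P m) : ℕ :=
  sInf {r | ∀ i : Fin s.k1, r ≤ i.val → RowConst s i}

/-- A matrix simplex is degenerate if it is the image of a degeneracy
operator. -/
def IsDegen {m : ℕ} (s : MatSimplex P (m + 1)) : Prop :=
  ∃ (t : MatSimplex P m) (i : Fin (m + 1)), s = sDeg t i

/-- A matrix simplex is suspect if it is degenerate, or has suspect index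
`r ≤ k` and the entry `σ((r-1, 0) < (r, 0))` is an identity. -/
def IsSuspect {m : ℕ} (s : MatSimplex P (m + 1)) : Prop :=
  IsDegen s ∨
  (∃ (hr1 : 1 ≤ suspectIndex s) (hrk : suspectIndex s + 1 ≤ s.k1) (h0 : 0 < s.l1),
    ∃ he : s.mat.obj (⟨suspectIndex s - 1, by omega⟩, Opposite.op (⟨0, h0⟩ : Fin s.l1)) =
           s.mat.obj (⟨suspectIndex s, by omega⟩, Opposite.op (⟨0, h0⟩ : Fin s.l1)),
      s.mat.map ((homOfLE (Fin.mk_le_mk.mpr (by omega)), 𝟙 (Opposite.op (⟨0, h0⟩ : Fin s.l1))) :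
          ((⟨suspectIndex s - 1, by omega⟩ : Fin s.k1), Opposite.op (⟨0, h0⟩ : Fin s.l1)) ⟶
          ((⟨suspectIndex s, by omega⟩ : Fin s.k1), Opposite.op (⟨0, h0⟩ : Fin s.l1))) =
        eqToHom he)


/-!
The rows of the face `d_b σ` deleting row `b` are the rows of `σ` reindexed along
`Fin.succAbove b`. If `b < r`, the constant rows `r, …, k` of `σ` become the rows
`r - 1, …, k - 1` of the face, so its suspect index is at most `r - 1`, and exactly `r - 1` when
`b ≤ r - 2`, since then the non-constant row `r - 1` of `σ` survives as row `r - 2`. If `b ≥ r`,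
row `r - 1` keeps its position and the rows after it stay constant, so the index stays `r`.
When neither row `r - 1` nor row `r` is deleted (`b ≤ r - 2` or `b ≥ r + 1`), the identity
`σ((r - 1, 0) < (r, 0))` reappears as the arrow of the face at its own suspect index, which is
therefore suspect. Deleting a column does not change the number of rows.
-/

instance {C D : Type*} [Category C] [Category D] [Quiver.IsThin C] [Quiver.IsThin D] :
    Quiver.IsThin (C × D) :=
  fun _ _ => ⟨fun _ _ => Prod.ext (Subsingleton.elim _ _) (Subsingleton.elim _ _)⟩

instance {C : Type*} [Category C] [Quiver.IsThin C] : Quiver.IsThin Cᵒᵖ :=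
  fun _ _ => ⟨fun _ _ => Quiver.Hom.unop_inj (Subsingleton.elim _ _)⟩

def MapsToIdentity {C D : Type*} [Category C] [Category D] (F : C ⥤ D) {x y : C} (f : x ⟶ y) :
    Prop :=
  ∃ h : F.obj x = F.obj y, F.map f = eqToHom h

lemma mapsToIdentity_congr {C D : Type*} [Category C] [Category D] [Quiver.IsThin C]
    (F : C ⥤ D) {x y x' y' : C} (hx : x = x') (hy : y = y') (f : x ⟶ y) (f' : x' ⟶ y') :
    MapsToIdentity F f ↔ MapsToIdentity F f' := by
  subst hx hy
  rw [Subsingleton.elim f f']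

lemma Fin.val_succAbove_of_lt {n : ℕ} {b : Fin (n + 1)} {i : Fin n} (h : i.val < b.val) :
    (b.succAbove i).val = i.val := by
  rw [Fin.succAbove_of_castSucc_lt b i h, Fin.val_castSucc]

lemma Fin.val_succAbove_of_le {n : ℕ} {b : Fin (n + 1)} {i : Fin n} (h : b.val ≤ i.val) :
    (b.succAbove i).val = i.val + 1 := by
  rw [Fin.succAbove_of_le_castSucc b i h, Fin.val_succ]

lemma Fin.val_le_val_succAbove {n : ℕ} (b : Fin (n + 1)) (i : Fin n) :
    i.val ≤ (b.succAbove i).val := by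
  rcases lt_or_ge i.val b.val with h | h
  · rw [Fin.val_succAbove_of_lt h]
  · rw [Fin.val_succAbove_of_le h]
    exact Nat.le_succ _

section SuspectIndex

variable {m : ℕ}

lemma suspectIndex_le_iff (s : MatSimplex P m) (r : ℕ) :
    suspectIndex s ≤ r ↔ ∀ i : Fin s.k1, r ≤ i.val → RowConst s i := by
  refine ⟨fun h i hi => ?_, fun h => Nat.sInf_le h⟩
  have hne : {r | ∀ i : Fin s.k1, r ≤ i.val → RowConst s i}.Nonempty :=
    ⟨s.k1, fun i hi => absurd i.isLt (by omega)⟩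
  exact Nat.sInf_mem hne i (h.trans hi)

lemma suspectIndex_eq_iff (s : MatSimplex P m) {r : ℕ} (hr : 0 < r) :
    suspectIndex s = r ↔
      (∀ i : Fin s.k1, r ≤ i.val → RowConst s i) ∧
        ∃ i : Fin s.k1, i.val + 1 = r ∧ ¬ RowConst s i := by
  have hge : r ≤ suspectIndex s ↔ ¬ suspectIndex s ≤ r - 1 := by omega
  rw [le_antisymm_iff, hge, suspectIndex_le_iff, suspectIndex_le_iff]
  refine and_congr_right fun hrows =>
    ⟨fun h => ?_, fun ⟨i, hi, hnc⟩ h => hnc (h i (by omega))⟩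
  obtain ⟨i, hi, hnc⟩ := not_forall₂.mp h
  exact ⟨i, by_contra fun hne => hnc (hrows i (by omega)), hnc⟩

end SuspectIndex

section Suspect

variable {m : ℕ}

def IsSuspectAt (s : MatSimplex P (m + 1)) (r : ℕ) : Prop :=
  ∃ (hr1 : 1 ≤ r) (hrk : r + 1 ≤ s.k1) (h0 : 0 < s.l1),
    MapsToIdentity s.mat
      ((homOfLE (Fin.mk_le_mk.mpr (by omega)), 𝟙 (Opposite.op (⟨0, h0⟩ : Fin s.l1))) :
        ((⟨r - 1, by omega⟩ : Fin s.k1), Opposite.op (⟨0, h0⟩ : Fin s.l1)) ⟶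
        ((⟨r, by omega⟩ : Fin s.k1), Opposite.op (⟨0, h0⟩ : Fin s.l1)))

lemma IsSuspect.isSuspectAt {s : MatSimplex P (m + 1)} (hs : IsSuspect s) (hnd : ¬ IsDegen s) :
    IsSuspectAt s (suspectIndex s) :=
  hs.resolve_left hnd

lemma IsSuspectAt.isSuspect {s : MatSimplex P (m + 1)} {r : ℕ} (hs : IsSuspectAt s r)
    (hr : suspectIndex s = r) : IsSuspect s :=
  Or.inr (hr ▸ hs)

end Suspect

section Faces

lemma dFace_k1_of_le {m : ℕ} (s : MatSimplex P (m + 1)) (a : Fin (m + 2)) (ha : s.k1 ≤ a.val) :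
    (dFace s a).k1 = s.k1 := by
  obtain ⟨k1, _ | l, hkl, mat⟩ := s
  · exact absurd a.isLt (by dsimp only at ha hkl; omega)
  · simp only [dFace, dif_neg (Nat.not_lt.mpr ha)]

variable {m k L : ℕ} (hkl : k + 1 + L = m + 3) (mat : Fin (k + 1) × (Fin L)ᵒᵖ ⥤ P)

def rowFace (b : Fin (k + 1)) : MatSimplex P (m + 1) :=
  ⟨k, L, by omega, ((Fin.strictMono_succAbove b).monotone.functor.prod (𝟭 _)) ⋙ mat⟩

lemma dFace_mk_of_lt (a : Fin (m + 3)) (ha : a.val < k + 1) :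
    dFace (⟨k + 1, L, hkl, mat⟩ : MatSimplex P (m + 2)) a = rowFace hkl mat ⟨a, ha⟩ := by
  simp only [dFace, dif_pos ha]
  rfl

lemma rowConst_rowFace_iff (b : Fin (k + 1)) (i : Fin k) :
    RowConst (rowFace hkl mat b) i ↔
      RowConst (⟨k + 1, L, hkl, mat⟩ : MatSimplex P (m + 2)) (b.succAbove i) :=
  forall₂_congr fun _ _ => forall_congr' fun _ => mapsToIdentity_congr mat rfl rfl _ _

lemma suspectIndex_rowFace_le {r : ℕ} {b : Fin (k + 1)} (hb : b.val < r)
    (hS : suspectIndex (⟨k + 1, L, hkl, mat⟩ : MatSimplex P (m + 2)) ≤ r) :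
    suspectIndex (rowFace hkl mat b) ≤ r - 1 := by
  rw [suspectIndex_le_iff] at hS ⊢
  intro (i : Fin k) hi
  exact (rowConst_rowFace_iff hkl mat b i).mpr
    (hS (b.succAbove i) (by rw [Fin.val_succAbove_of_le (by omega)]; omega))

lemma suspectIndex_rowFace_of_add_two_le {r : ℕ} {b : Fin (k + 1)} (hb : b.val + 2 ≤ r)
    (hS : suspectIndex (⟨k + 1, L, hkl, mat⟩ : MatSimplex P (m + 2)) = r) :
    suspectIndex (rowFace hkl mat b) = r - 1 := by
  have hrows :=
    (suspectIndex_le_iff _ _).mp (suspectIndex_rowFace_le hkl mat (b := b) (by omega) hS.le)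
  obtain ⟨-, ⟨i, hik⟩, hi, hnc⟩ := (suspectIndex_eq_iff _ (by omega)).mp hS
  replace hi : i + 1 = r := hi
  have hik' : i < k + 1 := hik
  rw [suspectIndex_eq_iff _ (by omega)]
  refine ⟨hrows, (⟨i - 1, by omega⟩ : Fin k), by dsimp only; omega, ?_⟩
  rwa [rowConst_rowFace_iff, show b.succAbove ⟨i - 1, _⟩ = ⟨i, hik⟩ from
    Fin.ext (by rw [Fin.val_succAbove_of_le (by dsimp only; omega)]; dsimp only; omega)]

lemma suspectIndex_rowFace_of_le {r : ℕ} {b : Fin (k + 1)} (hr : 0 < r) (hb : r ≤ b.val)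
    (hS : suspectIndex (⟨k + 1, L, hkl, mat⟩ : MatSimplex P (m + 2)) = r) :
    suspectIndex (rowFace hkl mat b) = r := by
  obtain ⟨hrows, ⟨i, hik⟩, hi, hnc⟩ := (suspectIndex_eq_iff _ hr).mp hS
  replace hi : i + 1 = r := hi
  rw [suspectIndex_eq_iff _ hr]
  refine ⟨fun (j : Fin k) hj => ?_, (⟨i, by omega⟩ : Fin k), hi, ?_⟩
  · exact (rowConst_rowFace_iff hkl mat b j).mpr
      (hrows (b.succAbove j) (hj.trans (Fin.val_le_val_succAbove b j)))
  · rwa [rowConst_rowFace_iff, show b.succAbove ⟨i, _⟩ = ⟨i, hik⟩ from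
      Fin.ext (Fin.val_succAbove_of_lt (by dsimp only; omega))]

lemma IsSuspectAt.rowFace {r r' : ℕ} {b : Fin (k + 1)}
    (hS : IsSuspectAt (⟨k + 1, L, hkl, mat⟩ : MatSimplex P (m + 2)) r)
    (hr' : 1 ≤ r') (hr'k : r' + 1 ≤ k)
    (hprev : (b.succAbove ⟨r' - 1, by omega⟩).val = r - 1)
    (hcur : (b.succAbove ⟨r', by omega⟩).val = r) :
    IsSuspectAt (rowFace hkl mat b) r' := by
  obtain ⟨_, _, hL, hid⟩ := hS
  refine ⟨hr', hr'k, hL, (mapsToIdentity_congr mat ?_ ?_ _ _).mpr hid⟩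
  · exact Prod.ext (Fin.ext hprev) rfl
  · exact Prod.ext (Fin.ext hcur) rfl

lemma isSuspect_rowFace_of_add_two_le {r : ℕ} {b : Fin (k + 1)} (hb : b.val + 2 ≤ r)
    (hS : IsSuspectAt (⟨k + 1, L, hkl, mat⟩ : MatSimplex P (m + 2)) r)
    (hidx : suspectIndex (⟨k + 1, L, hkl, mat⟩ : MatSimplex P (m + 2)) = r) :
    IsSuspect (rowFace hkl mat b) := by
  have hrk : r ≤ k := by have := hS.2.1; dsimp only at this; omega
  refine (hS.rowFace hkl mat (r' := r - 1) (by omega) (by omega) ?_ ?_).isSuspect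
    (suspectIndex_rowFace_of_add_two_le hkl mat hb hidx)
  all_goals rw [Fin.val_succAbove_of_le (by dsimp only; omega)]; dsimp only; omega

lemma isSuspect_rowFace_of_lt {r : ℕ} {b : Fin (k + 1)} (hb : r < b.val)
    (hS : IsSuspectAt (⟨k + 1, L, hkl, mat⟩ : MatSimplex P (m + 2)) r)
    (hidx : suspectIndex (⟨k + 1, L, hkl, mat⟩ : MatSimplex P (m + 2)) = r) :
    IsSuspect (rowFace hkl mat b) := by
  have hr : 1 ≤ r := hS.1
  refine (hS.rowFace hkl mat (r' := r) hr (by omega) ?_ ?_).isSuspect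
    (suspectIndex_rowFace_of_le hkl mat hr hb.le hidx)
  all_goals exact Fin.val_succAbove_of_lt (by dsimp only; omega)

end Faces

theorem stmt13_general (P : Type) [SmallCategory P] (e : ℕ) (s : MatSimplex P (e + 2))
    (k r : ℕ) (hk : s.k1 = k + 1)
    (hnd : ¬ IsDegen s) (hsus : IsSuspect s)
    (hr : suspectIndex s = r) (a : Fin (e + 3)) :
    -- faces of indices `0 ≤ a ≤ r - 2` are suspect simplices:
    (a.val + 2 ≤ r → IsSuspect (dFace s a)) ∧
    -- the face of index `a = r - 1` has suspect index at most `r - 1`: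
    (a.val + 1 = r → suspectIndex (dFace s a) ≤ r - 1) ∧
    -- the face of index `a = r` has type `k - 1` and suspect index `r`:
    (a.val = r → (dFace s a).k1 = k ∧ suspectIndex (dFace s a) = r) ∧
    -- faces of indices `r + 1 ≤ a ≤ k` are suspect simplices:
    (r + 1 ≤ a.val → a.val ≤ k → IsSuspect (dFace s a)) ∧
    -- faces of indices `k + 1 ≤ a ≤ d + 1` have type `k`:
    (k + 1 ≤ a.val → (dFace s a).k1 = k + 1) := by
  have hS := hsus.isSuspectAt hnd
  rw [hr] at hS
  have hr1 : 1 ≤ r := hS.1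
  have hrk : r ≤ k := by have := hS.2.1; omega
  obtain ⟨_, L, hkl, mat⟩ := s
  obtain rfl : _ = k + 1 := hk
  refine ⟨fun ha => ?_, fun ha => ?_, fun ha => ?_, fun ha ha' => ?_,
    fun ha => dFace_k1_of_le _ a ha⟩ <;> rw [dFace_mk_of_lt hkl mat a (by omega)]
  · exact isSuspect_rowFace_of_add_two_le hkl mat ha hS hr
  · exact suspectIndex_rowFace_le hkl mat (by dsimp only; omega) hr.le
  · exact ⟨rfl, suspectIndex_rowFace_of_le hkl mat hr1 ha.ge hr⟩
  · exact isSuspect_rowFace_of_lt hkl mat ha hS hr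

theorem stmt13 (P : Type) [SmallCategory P] (e : ℕ) (s : MatSimplex P (e + 2))
    (k r : ℕ) (hk : s.k1 = k + 1)
    (hnd : ¬ IsDegen s) (hsus : IsSuspect s)
    (hr : suspectIndex s = r) (hrk : r ≤ k) (a : Fin (e + 3)) :
    -- faces of indices `0 ≤ a ≤ r - 2` are suspect simplices:
    (a.val + 2 ≤ r → IsSuspect (dFace s a)) ∧
    -- the face of index `a = r - 1` has suspect index at most `r - 1`:
    (a.val + 1 = r → suspectIndex (dFace s a) ≤ r - 1) ∧
    -- the face of index `a = r` has type `k - 1` and suspect index `r`: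
    (a.val = r → (dFace s a).k1 = k ∧ suspectIndex (dFace s a) = r) ∧
    -- faces of indices `r + 1 ≤ a ≤ k` are suspect simplices:
    (r + 1 ≤ a.val → a.val ≤ k → IsSuspect (dFace s a)) ∧
    -- faces of indices `k + 1 ≤ a ≤ d + 1` have type `k`:
    (k + 1 ≤ a.val → (dFace s a).k1 = k + 1) :=
  stmt13_general P e s k r hk hnd hsus hr a
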